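/- arXiv:1501.02381 — 3 statements merged into one kernel-verified Lean document; each statement's English description precedes it below -/
import Mathlib

section
/- Let Φ = A/B be a rational function with A, B coprime polynomials of exact degrees κ and λ respectively, and let ζ ∈ ℂ with B(ζ) ≠ 0. If p > κ and q > λ, then the q×q Hankel determinant of the Taylor coefficients (aᵢ)_{p-q+1 ≤ i ≤ p+q-1} of Φ at ζ (with aᵢ = 0 for i < 0) vanishes. -/
noncomputable def aZ (a : ℕ → ℂ) (k : ℤ) : ℂ := if k < 0 then 0 else a k.toNat

noncomputable def hankelDet (a : ℕ → ℂ) (p q : ℕ) : ℂ :=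
  Matrix.det (Matrix.of fun i j : Fin q => aZ a ((p : ℤ) - q + 1 + (i : ℕ) + (j : ℕ)))

noncomputable def Spoly (a : ℕ → ℂ) (ζ : ℂ) (k : ℤ) : Polynomial ℂ :=
  if k < 0 then 0 else
    ∑ v ∈ Finset.range (k.toNat + 1), Polynomial.C (a v) * (Polynomial.X - Polynomial.C ζ) ^ v

noncomputable def padeDenomPoly (a : ℕ → ℂ) (ζ : ℂ) (p q : ℕ) : Polynomial ℂ :=
  Matrix.det (Matrix.of fun i j : Fin (q + 1) =>
    if (i : ℕ) = 0 then (Polynomial.X - Polynomial.C ζ) ^ (q - (j : ℕ))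
    else Polynomial.C (aZ a ((p : ℤ) - q + (i : ℕ) + (j : ℕ))))

noncomputable def padeNumPoly (a : ℕ → ℂ) (ζ : ℂ) (p q : ℕ) : Polynomial ℂ :=
  Matrix.det (Matrix.of fun i j : Fin (q + 1) =>
    if (i : ℕ) = 0 then
      (Polynomial.X - Polynomial.C ζ) ^ (q - (j : ℕ)) * Spoly a ζ ((p : ℤ) - q + (j : ℕ))
    else Polynomial.C (aZ a ((p : ℤ) - q + (i : ℕ) + (j : ℕ))))

noncomputable def tc (f : ℂ → ℂ) (ζ : ℂ) (v : ℕ) : ℂ := iteratedDeriv v f ζ / (v.factorial : ℂ)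

noncomputable def padeVal (f : ℂ → ℂ) (ζ : ℂ) (p q : ℕ) (z : ℂ) : ℂ :=
  (padeNumPoly (tc f ζ) ζ p q).eval z / (padeDenomPoly (tc f ζ) ζ p q).eval z

noncomputable def ratSeries (A B : Polynomial ℂ) (ζ : ℂ) : PowerSeries ℂ :=
  ((Polynomial.taylor ζ A : Polynomial ℂ) : PowerSeries ℂ) *
    ((Polynomial.taylor ζ B : Polynomial ℂ) : PowerSeries ℂ)⁻¹

def IsPade (a : ℕ → ℂ) (ζ : ℂ) (p q : ℕ) (A B : Polynomial ℂ) : Prop :=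
  A.degree ≤ (p : ℕ) ∧ B.degree ≤ (q : ℕ) ∧ B.eval ζ = 1 ∧
    ∀ v ≤ p + q, PowerSeries.coeff v (ratSeries A B ζ) = a v

/-!
Since `B · Φ = A`, the Taylor coefficients `b₀, …, b_λ` of `B` at `ζ` satisfy the linear
recurrence `∑ₘ bₘ a_{k-m} = 0` for every `k > κ`. For `p > κ` and `q > λ` this says that the
reversed vector `(b_{q-1}, …, b₀)`, nonzero because `b₀ = B(ζ) ≠ 0`, lies in the kernel of the
`q × q` Hankel matrix.
-/

open Polynomial Finset

theorem aZ_natCast_sub (a : ℕ → ℂ) (k m : ℕ) :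
    aZ a ((k : ℤ) - m) = if m ≤ k then a (k - m) else 0 := by
  unfold aZ
  split_ifs <;> first | omega | rfl | congr 1; omega

theorem hankelDet_eq_zero_of_recurrence (a b : ℕ → ℂ) {p q : ℕ} (hq : 0 < q) (hb : b 0 ≠ 0)
    (hrec : ∀ k, p ≤ k → ∑ m ∈ range q, b m * aZ a ((k : ℤ) - m) = 0) :
    hankelDet a p q = 0 := by
  rw [hankelDet, ← Matrix.exists_mulVec_eq_zero_iff]
  refine ⟨fun j : Fin q => b (q - 1 - j),
    fun h => hb (by simpa using congrFun h ⟨q - 1, by omega⟩), funext fun i => ?_⟩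
  rw [Pi.zero_apply, ← hrec (p + i) (by omega), ← sum_range_reflect, Matrix.mulVec, dotProduct,
    ← Fin.sum_univ_eq_sum_range]
  refine Fintype.sum_congr _ _ fun j => ?_
  have hidx : ((p + i : ℕ) : ℤ) - ((q - 1 - j : ℕ) : ℤ) = (p : ℤ) - q + 1 + i + j := by
    have := j.isLt
    omega
  rw [Matrix.of_apply, hidx, mul_comm]

theorem sum_coeff_mul_aZ_eq_coeff_mul (g : ℂ[X]) (f : PowerSeries ℂ) {q : ℕ}
    (hg : g.natDegree < q) (k : ℕ) :
    ∑ m ∈ range q, g.coeff m * aZ (fun v => PowerSeries.coeff v f) ((k : ℤ) - m) =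
      PowerSeries.coeff k ((g : PowerSeries ℂ) * f) := by
  rw [PowerSeries.coeff_mul, Nat.sum_antidiagonal_eq_sum_range_succ_mk]
  simp only [coeff_coe, aZ_natCast_sub, mul_ite, mul_zero, ← sum_filter]
  refine sum_subset (fun m hm => ?_) fun m hmk hmq => ?_
  · simp only [mem_filter, mem_range] at hm ⊢
    omega
  simp only [mem_range, mem_filter] at hmk hmq
  rw [coeff_eq_zero_of_natDegree_lt (by omega), zero_mul]

theorem taylor_mul_ratSeries (A B : ℂ[X]) {ζ : ℂ} (hζ : B.eval ζ ≠ 0) :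
    (taylor ζ B : PowerSeries ℂ) * ratSeries A B ζ = taylor ζ A := by
  have hconst : PowerSeries.constantCoeff (taylor ζ B : PowerSeries ℂ) ≠ 0 := by
    rwa [← PowerSeries.coeff_zero_eq_constantCoeff_apply, coeff_coe, taylor_coeff_zero]
  rw [ratSeries, mul_left_comm, PowerSeries.mul_inv_cancel _ hconst, mul_one]

theorem hankel_det_vanishes_of_rational_general (A B : Polynomial ℂ) (κ l : ℕ)
    (hA : A.natDegree = κ) (hB : B.natDegree = l) (ζ : ℂ) (hζ : B.eval ζ ≠ 0)
    (p q : ℕ) (hp : κ < p) (hq : l < q) :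
    hankelDet (fun v => PowerSeries.coeff v (ratSeries A B ζ)) p q = 0 := by
  refine hankelDet_eq_zero_of_recurrence _ (taylor ζ B).coeff (by omega)
    (by rwa [taylor_coeff_zero]) fun k hk => ?_
  rw [sum_coeff_mul_aZ_eq_coeff_mul _ _ (by rw [natDegree_taylor]; omega),
    taylor_mul_ratSeries A B hζ, coeff_coe]
  exact coeff_eq_zero_of_natDegree_lt (by rw [natDegree_taylor]; omega)

/-- For a rational function `Φ = A/B` with `A, B` coprime of exact degrees `κ`, `λ`,
`B(ζ) ≠ 0`, and `p > κ`, `q > λ`, the `q×q` Hankel determinant of the Taylor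
coefficients of `Φ` at `ζ` vanishes. -/
theorem hankel_det_vanishes_of_rational (A B : Polynomial ℂ) (κ l : ℕ) (hAB : IsCoprime A B)
    (hA : A.natDegree = κ) (hB : B.natDegree = l) (ζ : ℂ) (hζ : B.eval ζ ≠ 0)
    (p q : ℕ) (hp : κ < p) (hq : l < q) :
    hankelDet (fun v => PowerSeries.coeff v (ratSeries A B ζ)) p q = 0 :=
  hankel_det_vanishes_of_rational_general A B κ l hA hB ζ hζ p q hp hq
end

section
/- Let Ω ⊂ ℂ be a domain. Then there exists a sequence (Kₘ)_{m≥1} of compact subsets of ℂ \ Ω, each with connected complement in ℂ, such that every compact set K ⊂ ℂ \ Ω with connected complement is contained in some Kₘ. -/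
open Set Metric TopologicalSpace

/-!
Fix a countable basis `B` of connected open sets. The candidates are the compact sets
`closedBall 0 m \ (Ω ∪ ⋃₀ t)` with `t ⊆ B` finite; there are countably many of them. Given `K`,
join a point of `Ω` to a point outside a ball `closedBall 0 m ⊇ K` by a path in the connected open
set `Kᶜ`, and cover the path by finitely many basic sets inside `Kᶜ`. Their union is connected and
meets both `Ω` and the exterior of the ball, so the corresponding candidate contains `K` and has
connected complement.
-/

theorem isConnected_compl_closedBall {E : Type*} [NormedAddCommGroup E] [NormedSpace ℝ E]
    (h : 1 < Module.rank ℝ E) (x : E) (r : ℝ) : IsConnected (closedBall x r)ᶜ := by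
  rcases lt_or_ge r 0 with hr | hr
  · simpa [closedBall_eq_empty.2 hr] using isConnected_univ
  have hpolar : (closedBall x r)ᶜ = (fun p : ℝ × E => x + p.1 • p.2) '' (Ioi r ×ˢ sphere 0 1) := by
    ext z
    simp only [mem_compl_iff, mem_closedBall, not_le, mem_image, mem_prod, mem_Ioi,
      mem_sphere_zero_iff_norm, Prod.exists]
    constructor
    · intro hz
      have hz0 : ‖z - x‖ ≠ 0 := by rw [← dist_eq_norm]; linarith
      refine ⟨‖z - x‖, ‖z - x‖⁻¹ • (z - x), ⟨?_, ?_⟩, ?_⟩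
      · rwa [← dist_eq_norm]
      · rw [norm_smul, norm_inv, norm_norm, inv_mul_cancel₀ hz0]
      · rw [smul_smul, mul_inv_cancel₀ hz0, one_smul, add_sub_cancel]
    · rintro ⟨t, u, ⟨ht, hu⟩, rfl⟩
      rwa [dist_eq_norm, add_sub_cancel_left, norm_smul, hu, mul_one, Real.norm_eq_abs,
        abs_of_pos (hr.trans_lt ht)]
  rw [hpolar]
  exact (isConnected_Ioi.prod (isConnected_sphere h 0 zero_le_one)).image _ (by fun_prop)

theorem TopologicalSpace.IsTopologicalBasis.exists_finite_isPreconnected_sUnion_superset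
    {X : Type*} [TopologicalSpace X] {B : Set (Set X)} (hB : IsTopologicalBasis B)
    (hBc : ∀ V ∈ B, IsPreconnected V) {C U : Set X} (hC : IsCompact C) (hCc : IsPreconnected C)
    (hU : IsOpen U) (hCU : C ⊆ U) :
    ∃ t ⊆ B, t.Finite ∧ ⋃₀ t ⊆ U ∧ C ⊆ ⋃₀ t ∧ IsPreconnected (⋃₀ t) := by
  have hV : ∀ x ∈ C, ∃ V ∈ B, x ∈ V ∧ V ⊆ U := fun x hx => hB.exists_subset_of_mem_open (hCU hx) hU
  choose! V hVB hxV hVU using hV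
  obtain ⟨s, hsC, hCs⟩ := hC.elim_nhds_subcover V fun x hx => hB.mem_nhds (hVB x hx) (hxV x hx)
  refine ⟨V '' s, image_subset_iff.2 fun x hx => hVB x (hsC x hx), s.finite_toSet.image V, ?_,
    by rwa [sUnion_image], ?_⟩
  · rw [sUnion_image]
    exact iUnion₂_subset fun x hx => hVU x (hsC x hx)
  rw [sUnion_image]
  refine isPreconnected_of_forall_pair ?_
  simp only [mem_iUnion₂]
  -- two points of the union are joined through `C`, which every `V x` meets
  rintro y ⟨x, hx, hy⟩ y' ⟨x', hx', hy'⟩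
  refine ⟨V x ∪ C ∪ V x', union_subset (union_subset (subset_biUnion_of_mem hx) hCs)
    (subset_biUnion_of_mem hx'), Or.inl (Or.inl hy), Or.inr hy', ?_⟩
  exact ((hBc _ (hVB x (hsC x hx))).union x (hxV x (hsC x hx)) (hsC x hx) hCc).union x'
    (Or.inr (hsC x' hx')) (hxV x' (hsC x' hx')) (hBc _ (hVB x' (hsC x' hx')))

theorem exists_closedBall_diff_superset_isConnected_compl {E : Type*} [NormedAddCommGroup E]
    [NormedSpace ℝ E] (h : 1 < Module.rank ℝ E) {B : Set (Set E)} (hB : IsTopologicalBasis B)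
    (hBc : ∀ V ∈ B, IsPreconnected V) {Ω K : Set E} (hconn : IsConnected Ω) (hK : IsCompact K)
    (hKΩ : K ⊆ Ωᶜ) (hKc : IsConnected Kᶜ) :
    ∃ t ⊆ B, t.Finite ∧ ∃ m : ℕ,
      K ⊆ closedBall 0 m \ (Ω ∪ ⋃₀ t) ∧ IsConnected (closedBall 0 m \ (Ω ∪ ⋃₀ t))ᶜ := by
  obtain ⟨R, hR⟩ := hK.isBounded.subset_closedBall 0
  obtain ⟨m, hm⟩ := exists_nat_ge R
  have hKm : K ⊆ closedBall 0 m := hR.trans (closedBall_subset_closedBall hm)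
  have hext := isConnected_compl_closedBall h (0 : E) m
  obtain ⟨a, ha⟩ := hconn.nonempty
  obtain ⟨b, hb⟩ := hext.nonempty
  obtain ⟨γ, hγ⟩ := (hK.isClosed.isOpen_compl.isConnected_iff_isPathConnected.1 hKc).joinedIn
    a (fun haK => hKΩ haK ha) b (fun hbK => hb (hKm hbK))
  obtain ⟨t, htB, htf, htK, hγt, ht⟩ := hB.exists_finite_isPreconnected_sUnion_superset hBc
    (isCompact_range γ.continuous) (isConnected_range γ.continuous).isPreconnected
    hK.isClosed.isOpen_compl (range_subset_iff.2 hγ)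
  have hat : a ∈ ⋃₀ t := hγt ⟨0, γ.source⟩
  have hbt : b ∈ ⋃₀ t := hγt ⟨1, γ.target⟩
  refine ⟨t, htB, htf, m, fun z hz => ⟨hKm hz, ?_⟩, ?_⟩
  · rintro (hzΩ | hzt)
    exacts [hKΩ hz hzΩ, htK hzt hz]
  rw [sdiff_eq, compl_inter, compl_compl]
  exact hext.union ⟨b, hb, Or.inr hbt⟩ (hconn.union ⟨a, ha, hat⟩ ⟨⟨a, hat⟩, ht⟩)

/-- For a domain `Ω ⊆ ℂ` there is a sequence `Kₘ` of compact subsets of `ℂ \ Ω` with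
connected complements such that every compact `K ⊆ ℂ \ Ω` with connected complement is
contained in some `Kₘ`. -/
theorem exists_exhausting_compacts_outside (Ω : Set ℂ) (hΩ : IsOpen Ω)
    (hconn : IsConnected Ω) :
    ∃ Kseq : ℕ → Set ℂ,
      (∀ m : ℕ, IsCompact (Kseq m) ∧ Kseq m ⊆ Ωᶜ ∧ IsConnected (Kseq m)ᶜ) ∧
      ∀ K : Set ℂ, IsCompact K → K ⊆ Ωᶜ → IsConnected Kᶜ → ∃ m : ℕ, K ⊆ Kseq m := by
  obtain ⟨B, hBsub, hBc, hB⟩ := IsTopologicalBasis.isOpen_isPreconnected.exists_countable (α := ℂ)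
  have hrank : 1 < Module.rank ℝ ℂ := by rw [Complex.rank_real_complex]; norm_num
  have hcofinal {K : Set ℂ} := exists_closedBall_diff_superset_isConnected_compl hrank hB
    (fun V hV => (hBsub hV).2) hconn (K := K)
  set 𝒮 : Set (Set ℂ) := {L | IsConnected Lᶜ ∧
    ∃ t ⊆ B, t.Finite ∧ ∃ m : ℕ, closedBall 0 m \ (Ω ∪ ⋃₀ t) = L}
  have h𝒮 : 𝒮.Countable := by
    refine ((countable_ofPred_finite_subset hBc).biUnion fun t _ =>
      countable_range fun m : ℕ => closedBall 0 m \ (Ω ∪ ⋃₀ t)).mono ?_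
    rintro _ ⟨-, t, htB, htf, m, rfl⟩
    exact mem_biUnion (x := t) ⟨htf, htB⟩ (mem_range_self m)
  obtain ⟨t, htB, htf, m, -, hc⟩ := hcofinal isCompact_empty (empty_subset _)
    (by simpa using isConnected_univ)
  obtain ⟨Kseq, hKseq⟩ := h𝒮.exists_eq_range ⟨_, hc, t, htB, htf, m, rfl⟩
  refine ⟨Kseq, fun n => ?_, fun K hK hKΩ hKc => ?_⟩
  · obtain ⟨hc, t, htB, -, k, hk⟩ := hKseq.symm.subset (mem_range_self n)
    rw [← hk] at hc ⊢
    refine ⟨(isCompact_closedBall 0 k).diff ?_, fun z hz hzΩ => hz.2 (Or.inl hzΩ), hc⟩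
    exact hΩ.union (isOpen_sUnion fun V hV => (hBsub (htB hV)).1)
  · obtain ⟨t, htB, htf, m, hKt, hc⟩ := hcofinal hK hKΩ hKc
    obtain ⟨n, hn⟩ := hKseq.subset ⟨hc, t, htB, htf, m, rfl⟩
    exact ⟨n, hn ▸ hKt⟩
end

section
/- Let Ω ⊂ ℂ be open, L, L' ⊂ Ω compact, (p,q) ∈ ℕ², and s ≥ 1. Then the set G = { f ∈ H(Ω) : f ∈ D_{p,q}(ζ) for all ζ ∈ L and sup_{ζ∈L, z∈L'} |[p/q]_{f,ζ}(z) − f(z)| < 1/s } is open in H(Ω) with the topology of uniform convergence on compact subsets of Ω. -/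
/-- Membership in the set `G(Ω, L', L, p, q, s)`: `f` is holomorphic on `Ω`, lies in
`D_{p,q}(ζ)` for all `ζ ∈ L`, its Padé denominators have no zeros on `L'`, and
`sup_{ζ∈L, z∈L'} |[p/q]_{f,ζ}(z) − f(z)| < 1/s`. -/
def memG (Ω L L' : Set ℂ) (p q s : ℕ) (f : ℂ → ℂ) : Prop :=
  DifferentiableOn ℂ f Ω ∧
  (∀ ζ ∈ L, hankelDet (tc f ζ) p q ≠ 0) ∧
  (∀ ζ ∈ L, ∀ z ∈ L', (padeDenomPoly (tc f ζ) ζ p q).eval z ≠ 0) ∧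
  ∃ b : ℝ, b < 1 / (s : ℝ) ∧
    ∀ ζ ∈ L, ∀ z ∈ L', ‖padeVal f ζ p q z - f z‖ ≤ b

open Filter Metric Set Topology

section PadeContinuity

variable {X : Type*} [TopologicalSpace X] {a : X → ℕ → ℂ} {ζ z : X → ℂ}

theorem Continuous.aZ (ha : Continuous a) (k : ℤ) : Continuous fun x => aZ (a x) k := by
  unfold _root_.aZ
  split_ifs
  · exact continuous_const
  · exact (continuous_apply _).comp ha

theorem continuous_hankelDet (p q : ℕ) : Continuous fun a : ℕ → ℂ => hankelDet a p q :=
  (continuous_matrix fun _ _ => continuous_id.aZ _).matrix_det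

theorem Continuous.eval_Spoly (ha : Continuous a) (hζ : Continuous ζ) (hz : Continuous z)
    (k : ℤ) : Continuous fun x => (Spoly (a x) (ζ x) k).eval (z x) := by
  unfold Spoly
  split_ifs
  · simpa only [Polynomial.eval_zero] using continuous_const
  · simp only [Polynomial.eval_finsetSum, Polynomial.eval_mul, Polynomial.eval_C,
      Polynomial.eval_pow, Polynomial.eval_sub, Polynomial.eval_X]
    fun_prop

theorem Continuous.eval_det {n : Type*} [Fintype n] [DecidableEq n]
    {M : X → Matrix n n (Polynomial ℂ)} (hM : ∀ i j, Continuous fun x => (M x i j).eval (z x)) :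
    Continuous fun x => (M x).det.eval (z x) := by
  simp_rw [← Polynomial.coe_evalRingHom, RingHom.map_det]
  exact (continuous_matrix hM).matrix_det

theorem Continuous.eval_padeDenomPoly (ha : Continuous a) (hζ : Continuous ζ)
    (hz : Continuous z) (p q : ℕ) :
    Continuous fun x => (padeDenomPoly (a x) (ζ x) p q).eval (z x) := by
  refine Continuous.eval_det fun i j => ?_
  simp only [Matrix.of_apply]
  split_ifs
  · simp only [Polynomial.eval_pow, Polynomial.eval_sub, Polynomial.eval_X, Polynomial.eval_C]
    fun_prop
  · simpa only [Polynomial.eval_C] using ha.aZ _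

theorem Continuous.eval_padeNumPoly (ha : Continuous a) (hζ : Continuous ζ)
    (hz : Continuous z) (p q : ℕ) :
    Continuous fun x => (padeNumPoly (a x) (ζ x) p q).eval (z x) := by
  refine Continuous.eval_det fun i j => ?_
  simp only [Matrix.of_apply]
  split_ifs
  · simp only [Polynomial.eval_mul, Polynomial.eval_pow, Polynomial.eval_sub, Polynomial.eval_X,
      Polynomial.eval_C]
    exact ((hz.sub hζ).pow _).mul (ha.eval_Spoly hζ hz _)
  · simpa only [Polynomial.eval_C] using ha.aZ _

end PadeContinuity

theorem tendstoUniformlyOn_pi_iff {ι α κ : Type*} {β : κ → Type*} [∀ k, UniformSpace (β k)]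
    {F : ι → α → ∀ k, β k} {f : α → ∀ k, β k} {l : Filter ι} {s : Set α} :
    TendstoUniformlyOn F f l s ↔
      ∀ k, TendstoUniformlyOn (fun i x => F i x k) (fun x => f x k) l s := by
  simp only [tendstoUniformlyOn_iff_tendsto, Pi.uniformity, tendsto_iInf, tendsto_comap_iff]
  rfl

section UniformConvergence

variable {ι α β : Type*} [UniformSpace β] {F : ι → α → β} {f : α → β}
  {l : Filter ι} {s : Set α}

theorem TendstoUniformlyOn.prodMk_same {γ : Type*} [UniformSpace γ] {G : ι → α → γ} {g : α → γ}
    (hF : TendstoUniformlyOn F f l s) (hG : TendstoUniformlyOn G g l s) :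
    TendstoUniformlyOn (fun i x => (F i x, G i x)) (fun x => (f x, g x)) l s := by
  rw [tendstoUniformlyOn_iff_tendsto] at hF hG ⊢
  rw [uniformity_prod_eq_comap_prod, tendsto_comap_iff]
  exact hF.prodMk hG

theorem TendstoUniformlyOn.graph [UniformSpace α] (h : TendstoUniformlyOn F f l s) :
    TendstoUniformlyOn (fun i x => (x, F i x)) (fun x => (x, f x)) l s := by
  rw [tendstoUniformlyOn_iff_tendsto] at h ⊢
  rw [uniformity_prod_eq_comap_prod, tendsto_comap_iff]
  exact (tendsto_diag_uniformity _ _).prodMk h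

theorem TendstoUniformlyOn.eventually_forall_mem_of_isOpen [UniformSpace α]
    (h : TendstoUniformlyOn F f l s) (hs : IsCompact s) (hf : ContinuousOn f s) {U : Set (α × β)} (hU : IsOpen U)
    (hfU : ∀ x ∈ s, (x, f x) ∈ U) : ∀ᶠ i in l, ∀ x ∈ s, (x, F i x) ∈ U := by
  obtain ⟨V, hV, -, hVU⟩ := lebesgue_number_of_compact_open
    (hs.image_of_continuousOn (continuousOn_id.prodMk hf)) hU (image_subset_iff.2 hfU)
  filter_upwards [h.graph V hV] with i hi x hx
  exact hVU _ (mem_image_of_mem _ hx) (hi x hx)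

end UniformConvergence

section Holomorphic

variable {Ω K L : Set ℂ} {f : ℂ → ℂ}

theorem continuousOn_tc (hΩ : IsOpen Ω) (hf : DifferentiableOn ℂ f Ω) : ContinuousOn (tc f) Ω :=
  continuousOn_pi.2 fun n => by
    simpa only [tc, iteratedDeriv_eq_iterate] using
      ((hf.analyticOnNhd hΩ).iterated_deriv n).continuousOn.div_const (n.factorial : ℂ)

theorem norm_tc_sub_tc_le {g : ℂ → ℂ} {ζ : ℂ} {r ε : ℝ} (hr : 0 < r)
    (hf : DifferentiableOn ℂ f (closedBall ζ r)) (hg : DifferentiableOn ℂ g (closedBall ζ r))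
    (hfg : ∀ z ∈ closedBall ζ r, ‖f z - g z‖ ≤ ε) (n : ℕ) :
    ‖tc f ζ n - tc g ζ n‖ ≤ ε / r ^ n := by
  have hζ : closedBall ζ r ∈ 𝓝 ζ := closedBall_mem_nhds ζ hr
  have hsub : tc f ζ n - tc g ζ n = iteratedDeriv n (f - g) ζ / n.factorial := by
    rw [iteratedDeriv_sub (hf.analyticAt hζ).contDiffAt (hg.analyticAt hζ).contDiffAt, tc, tc,
      sub_div]
  have hcauchy := Complex.norm_iteratedDeriv_le_of_forall_mem_sphere_norm_le n hr
    ((hf.sub hg).diffContOnCl_ball subset_rfl) fun z hz => hfg z (sphere_subset_closedBall hz)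
  rw [hsub, norm_div, Complex.norm_natCast, div_le_iff₀ (by positivity)]
  calc ‖iteratedDeriv n (f - g) ζ‖ ≤ n.factorial * ε / r ^ n := hcauchy
    _ = ε / r ^ n * n.factorial := by ring

def holNhdsOn (Ω K : Set ℂ) (f : ℂ → ℂ) : Filter (ℂ → ℂ) :=
  ⨅ ε > (0 : ℝ), 𝓟 {g | DifferentiableOn ℂ g Ω ∧ ∀ z ∈ K, ‖f z - g z‖ < ε}

theorem hasBasis_holNhdsOn : (holNhdsOn Ω K f).HasBasis (fun ε : ℝ => 0 < ε)
    fun ε => {g | DifferentiableOn ℂ g Ω ∧ ∀ z ∈ K, ‖f z - g z‖ < ε} := by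
  refine hasBasis_biInf_principal' (fun ε hε δ hδ => ⟨min ε δ, lt_min hε hδ, ?_, ?_⟩) ⟨1, one_pos⟩
  · exact fun g hg => ⟨hg.1, fun z hz => (hg.2 z hz).trans_le (min_le_left _ _)⟩
  · exact fun g hg => ⟨hg.1, fun z hz => (hg.2 z hz).trans_le (min_le_right _ _)⟩

theorem tendstoUniformlyOn_holNhdsOn : TendstoUniformlyOn (fun g => g) f (holNhdsOn Ω K f) K :=
  Metric.tendstoUniformlyOn_iff.2 fun ε hε =>
    hasBasis_holNhdsOn.eventually_iff.2 ⟨ε, hε, fun g hg z hz => by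
      simpa only [dist_eq_norm] using hg.2 z hz⟩

theorem tendstoUniformlyOn_tc_holNhdsOn (hf : DifferentiableOn ℂ f Ω) (hKΩ : K ⊆ Ω) {r : ℝ}
    (hr : 0 < r) (hLK : ∀ ζ ∈ L, closedBall ζ r ⊆ K) :
    TendstoUniformlyOn (fun g => tc g) (tc f) (holNhdsOn Ω K f) L := by
  refine tendstoUniformlyOn_pi_iff.2 fun n => Metric.tendstoUniformlyOn_iff.2 fun ε hε => ?_
  refine hasBasis_holNhdsOn.eventually_iff.2 ⟨ε * r ^ n / 2, by positivity, ?_⟩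
  rintro g ⟨hg, hfg⟩ ζ hζ
  have hball := (hLK ζ hζ).trans hKΩ
  calc dist (tc f ζ n) (tc g ζ n) ≤ ε * r ^ n / 2 / r ^ n := by
        rw [dist_eq_norm]
        exact norm_tc_sub_tc_le hr (hf.mono hball) (hg.mono hball)
          (fun z hz => (hfg z (hLK ζ hζ hz)).le) n
    _ = ε / 2 := by field_simp
    _ < ε := half_lt_self hε

end Holomorphic

section Pade

variable {ι : Type*} {l : Filter ι} {F : ι → ℂ → ℂ} {f : ℂ → ℂ} {L L' : Set ℂ} {p q : ℕ}

theorem eventually_hankelDet_ne_zero (hL : IsCompact L)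
    (hcoef : TendstoUniformlyOn (fun i => tc (F i)) (tc f) l L) (hcont : ContinuousOn (tc f) L)
    (hH : ∀ ζ ∈ L, hankelDet (tc f ζ) p q ≠ 0) :
    ∀ᶠ i in l, ∀ ζ ∈ L, hankelDet (tc (F i) ζ) p q ≠ 0 :=
  hcoef.eventually_forall_mem_of_isOpen hL hcont
    (U := Prod.snd ⁻¹' {a | hankelDet a p q ≠ 0})
    ((isOpen_ne_fun (continuous_hankelDet p q) continuous_const).preimage continuous_snd) hH

theorem eventually_padeVal_sub_lt (hL : IsCompact L) (hL' : IsCompact L')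
    (hcoef : TendstoUniformlyOn (fun i => tc (F i)) (tc f) l L)
    (hval : TendstoUniformlyOn F f l L') (hcoef_cont : ContinuousOn (tc f) L)
    (hval_cont : ContinuousOn f L') {c : ℝ}
    (hf : ∀ ζ ∈ L, ∀ z ∈ L', (padeDenomPoly (tc f ζ) ζ p q).eval z ≠ 0 ∧
      ‖padeVal f ζ p q z - f z‖ < c) :
    ∀ᶠ i in l, ∀ ζ ∈ L, ∀ z ∈ L', (padeDenomPoly (tc (F i) ζ) ζ p q).eval z ≠ 0 ∧
      ‖padeVal (F i) ζ p q z - F i z‖ < c := by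
  set D : (ℂ × ℂ) × (ℕ → ℂ) × ℂ → ℂ := fun y => (padeDenomPoly y.2.1 y.1.1 p q).eval y.1.2
  set N : (ℂ × ℂ) × (ℕ → ℂ) × ℂ → ℂ := fun y => (padeNumPoly y.2.1 y.1.1 p q).eval y.1.2
  have hD : Continuous D :=
    continuous_snd.fst.eval_padeDenomPoly continuous_fst.fst continuous_fst.snd p q
  have hN : Continuous N :=
    continuous_snd.fst.eval_padeNumPoly continuous_fst.fst continuous_fst.snd p q
  have hU : IsOpen ({y | D y ≠ 0} ∩ (fun y => ‖N y / D y - y.2.2‖) ⁻¹' Iio c) :=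
    ((hN.continuousOn.div hD.continuousOn fun _ hy => hy).sub
      continuous_snd.snd.continuousOn).norm.isOpen_inter_preimage
      (isOpen_ne_fun hD continuous_const) isOpen_Iio
  have hunif : TendstoUniformlyOn (fun i x => (tc (F i) x.1, F i x.2)) (fun x => (tc f x.1, f x.2))
      l (L ×ˢ L') :=
    ((hcoef.comp Prod.fst).mono fun _ hx => hx.1).prodMk_same
      ((hval.comp Prod.snd).mono fun _ hx => hx.2)
  filter_upwards [hunif.eventually_forall_mem_of_isOpen (hL.prod hL')
    ((hcoef_cont.comp continuousOn_fst fun _ hx => hx.1).prodMk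
      (hval_cont.comp continuousOn_snd fun _ hx => hx.2)) hU
    fun x hx => hf x.1 hx.1 x.2 hx.2] with i hi ζ hζ z hz
  exact hi (ζ, z) ⟨hζ, hz⟩

end Pade

/-- Openness in `H(Ω)` is expressed through the basic neighbourhoods of the compact-open
topology. -/
theorem G_is_open_general (Ω L L' : Set ℂ) (hΩ : IsOpen Ω)
    (hL : IsCompact L) (hLΩ : L ⊆ Ω) (hL' : IsCompact L') (hL'Ω : L' ⊆ Ω)
    (p q s : ℕ) :
    ∀ f : ℂ → ℂ, memG Ω L L' p q s f →
      ∃ Lt : Set ℂ, IsCompact Lt ∧ Lt ⊆ Ω ∧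
        ∃ a > (0 : ℝ), ∀ g : ℂ → ℂ, DifferentiableOn ℂ g Ω →
          (∀ z ∈ Lt, ‖f z - g z‖ < a) → memG Ω L L' p q s g := by
  rintro f ⟨hf, hH, hD, b, hb, hsup⟩
  obtain ⟨r, hr, hrΩ⟩ :=
    (hL.union hL').exists_cthickening_subset_open hΩ (union_subset hLΩ hL'Ω)
  set K := cthickening r (L ∪ L')
  have hcoef : TendstoUniformlyOn (fun g => tc g) (tc f) (holNhdsOn Ω K f) L :=
    tendstoUniformlyOn_tc_holNhdsOn hf hrΩ hr fun ζ hζ =>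
      closedBall_subset_cthickening (mem_union_left L' hζ) r
  have hval : TendstoUniformlyOn (fun g => g) f (holNhdsOn Ω K f) L' :=
    tendstoUniformlyOn_holNhdsOn.mono (subset_union_right.trans (self_subset_cthickening _))
  have hcont := (continuousOn_tc hΩ hf).mono hLΩ
  obtain ⟨c, hbc, hcs⟩ := exists_between hb
  obtain ⟨a, ha, hgood⟩ := hasBasis_holNhdsOn.eventually_iff.1
    ((eventually_hankelDet_ne_zero hL hcoef hcont hH).and
      (eventually_padeVal_sub_lt hL hL' hcoef hval hcont (hf.continuousOn.mono hL'Ω)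
        fun ζ hζ z hz => ⟨hD ζ hζ z hz, (hsup ζ hζ z hz).trans_lt hbc⟩))
  refine ⟨K, (hL.union hL').cthickening, hrΩ, a, ha, fun g hg hfg => ?_⟩
  obtain ⟨hH', hpade⟩ := hgood ⟨hg, hfg⟩
  exact ⟨hg, hH', fun ζ hζ z hz => (hpade ζ hζ z hz).1, c, hcs,
    fun ζ hζ z hz => (hpade ζ hζ z hz).2.le⟩

/-- The set `G(Ω, L', L, p, q, s)` is open in `H(Ω)` for the topology of uniform
convergence on compact subsets of `Ω`, expressed via the basic neighborhoods of that
topology: around each member there is a compact set `L̃ ⊆ Ω` and an `a > 0` such that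
every holomorphic `g` with `sup_{L̃} |f − g| < a` is again a member. -/
theorem G_is_open (Ω L L' : Set ℂ) (hΩ : IsOpen Ω)
    (hL : IsCompact L) (hLΩ : L ⊆ Ω) (hL' : IsCompact L') (hL'Ω : L' ⊆ Ω)
    (p q s : ℕ) (hs : 1 ≤ s) :
    ∀ f : ℂ → ℂ, memG Ω L L' p q s f →
      ∃ Lt : Set ℂ, IsCompact Lt ∧ Lt ⊆ Ω ∧
        ∃ a > (0 : ℝ), ∀ g : ℂ → ℂ, DifferentiableOn ℂ g Ω →
          (∀ z ∈ Lt, ‖f z - g z‖ < a) → memG Ω L L' p q s g :=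
  G_is_open_general Ω L L' hΩ hL hLΩ hL' hL'Ω p q s
end
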